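/- arXiv:2010.03521 — 2 statements merged into one kernel-verified Lean document; each statement's English description precedes it below -/
import Mathlib

section
/- For every real σ > 1/2, the function t ↦ ‖X(σ + it)‖ is strictly monotonically decreasing on the interval (0, +∞), and strictly monotonically increasing on the interval (-∞, 0). -/
/-!
With `a = 1 - σ/2`, `b = (1 + σ)/2` and `y = t/2`, reflecting the numerator across the real
axis (`Γ(conj s) = conj Γ(s)`) gives `‖X(σ + it)‖ = (5/π)^(1/2 - σ) · ‖Γ(a + iy)‖ / ‖Γ(b + iy)‖`,
and `σ > 1/2` means `a < b`. By Gauss's product formula this ratio is the limit of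
`n^(a-b) · ∏_{j ≤ n} ‖b + j + iy‖ / ‖a + j + iy‖`, whose factors decrease in `y > 0` because
`(a + j)² ≤ (b + j)²`; so the ratio is non-increasing, and `Γ(s + 1) = s Γ(s)` peels off the
strictly decreasing factor `j = 0`. The ratio is even in `y`, which gives the statement for `t < 0`.
-/

open Complex ComplexConjugate Filter Set

noncomputable def X (s : ℂ) : ℂ :=
  (5 / Real.pi : ℂ) ^ ((1 : ℂ) / 2 - s) * Complex.Gamma (1 - s / 2) / Complex.Gamma ((1 + s) / 2)

lemma Gamma_ofReal_add_mul_I_ne_zero (x : ℝ) {y : ℝ} (hy : y ≠ 0) : Gamma (x + y * I) ≠ 0 :=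
  Gamma_ne_zero fun m h ↦ hy <| by simpa using congrArg im h

lemma norm_Gamma_conj (s : ℂ) : ‖Gamma (conj s)‖ = ‖Gamma s‖ := by
  rw [Gamma_conj, norm_conj]

lemma antitoneOn_norm_div_norm {p q : ℝ} (h : p ^ 2 ≤ q ^ 2) :
    AntitoneOn (fun y : ℝ ↦ ‖(q : ℂ) + y * I‖ / ‖(p : ℂ) + y * I‖) (Ioi 0) := by
  intro y₁ (h₁ : 0 < y₁) y₂ (h₂ : 0 < y₂) hy
  simp only [norm_add_mul_I]
  rw [← Real.sqrt_div' _ (by positivity), ← Real.sqrt_div' _ (by positivity)]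
  refine Real.sqrt_le_sqrt ?_
  rw [div_le_div_iff₀ (by positivity) (by positivity)]
  nlinarith [mul_nonneg (sub_nonneg.2 h) (sub_nonneg.2 (pow_le_pow_left₀ h₁.le hy 2))]

lemma strictAntiOn_norm_div_norm {p q : ℝ} (h : p ^ 2 < q ^ 2) :
    StrictAntiOn (fun y : ℝ ↦ ‖(q : ℂ) + y * I‖ / ‖(p : ℂ) + y * I‖) (Ioi 0) := by
  intro y₁ (h₁ : 0 < y₁) y₂ (h₂ : 0 < y₂) hy
  simp only [norm_add_mul_I]
  rw [← Real.sqrt_div' _ (by positivity), ← Real.sqrt_div' _ (by positivity)]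
  refine Real.sqrt_lt_sqrt (by positivity) ?_
  rw [div_lt_div_iff₀ (by positivity) (by positivity)]
  nlinarith [mul_pos (sub_pos.2 h) (sub_pos.2 (pow_lt_pow_left₀ hy h₁.le two_ne_zero))]

noncomputable def gammaNormRatio (a b y : ℝ) : ℝ :=
  ‖Gamma (a + y * I)‖ / ‖Gamma (b + y * I)‖

lemma gammaNormRatio_neg (a b y : ℝ) : gammaNormRatio a b (-y) = gammaNormRatio a b y := by
  have hconj (x : ℝ) : (x : ℂ) + (-y : ℝ) * I = conj ((x : ℂ) + y * I) := by
    apply Complex.ext <;> simp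
  simp only [gammaNormRatio, hconj, norm_Gamma_conj]

lemma norm_GammaSeq_div_norm_GammaSeq (a b y : ℝ) {n : ℕ} (hn : n ≠ 0) :
    ‖GammaSeq (a + y * I) n‖ / ‖GammaSeq (b + y * I) n‖ =
      (n : ℝ) ^ (a - b) *
        ∏ j ∈ Finset.range (n + 1),
          ‖((b + j : ℝ) : ℂ) + y * I‖ / ‖((a + j : ℝ) : ℂ) + y * I‖ := by
  have hn₀ : 0 < n := Nat.pos_of_ne_zero hn
  have hre (x : ℝ) : ((x : ℂ) + y * I).re = x := by simp
  simp only [GammaSeq, norm_div, norm_mul, norm_prod, norm_natCast_cpow_of_pos hn₀, norm_natCast,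
    hre, Finset.prod_div_distrib, Real.rpow_sub (Nat.cast_pos.mpr hn₀)]
  push_cast
  have hperm (x : ℝ) (j : ℕ) : (x : ℂ) + y * I + j = x + j + y * I := by ring
  simp only [hperm]
  field_simp

lemma antitoneOn_gammaNormRatio {a b : ℝ} (hab : a ≤ b) (hs : 0 ≤ a + b) :
    AntitoneOn (gammaNormRatio a b) (Ioi 0) := by
  refine antitoneOn_of_frequently_antitoneOn_of_tendsto (l := atTop)
    (F := fun n (y : ℝ) ↦ ‖GammaSeq (a + y * I) n‖ / ‖GammaSeq (b + y * I) n‖) ?_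
    fun y _ ↦ ((GammaSeq_tendsto_Gamma _).norm).div (GammaSeq_tendsto_Gamma _).norm
      (norm_ne_zero_iff.mpr (Gamma_ofReal_add_mul_I_ne_zero _ ‹y ∈ Ioi 0›.ne'))
  refine (eventually_ne_atTop 0).frequently.mono fun n hn ↦ ?_
  simp only [norm_GammaSeq_div_norm_GammaSeq _ _ _ hn]
  have hprod := AntitoneOn.finsetProd (s := Finset.range (n + 1))
    (fun j _ ↦ antitoneOn_norm_div_norm (p := a + j) (q := b + j)
      (by nlinarith [j.cast_nonneg (α := ℝ)]))
    fun j _ y _ ↦ by positivity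
  exact fun y₁ h₁ y₂ h₂ hy ↦ mul_le_mul_of_nonneg_left (hprod h₁ h₂ hy) (by positivity)

lemma gammaNormRatio_eq_mul_add_one (a b : ℝ) {y : ℝ} (hy : y ≠ 0) :
    gammaNormRatio a b y =
      ‖(b : ℂ) + y * I‖ / ‖(a : ℂ) + y * I‖ * gammaNormRatio (a + 1) (b + 1) y := by
  have hshift (x : ℝ) :
      ‖Gamma (x + y * I)‖ = ‖Gamma ((x + 1 : ℝ) + y * I)‖ / ‖(x : ℂ) + y * I‖ := by
    have hx : (x : ℂ) + y * I ≠ 0 := fun h ↦ hy <| by simpa using congrArg im h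
    rw [show ((x + 1 : ℝ) : ℂ) + y * I = (x + y * I) + 1 by push_cast; ring, Gamma_add_one _ hx,
      norm_mul, mul_div_cancel_left₀ _ (norm_ne_zero_iff.mpr hx)]
  simp only [gammaNormRatio, hshift a, hshift b]
  field_simp

lemma strictAntiOn_gammaNormRatio {a b : ℝ} (hab : a < b) (hs : 0 < a + b) :
    StrictAntiOn (gammaNormRatio a b) (Ioi 0) := by
  intro y₁ (h₁ : 0 < y₁) y₂ (h₂ : 0 < y₂) hy
  have hfirst := strictAntiOn_norm_div_norm (p := a) (q := b) (by nlinarith) h₁ h₂ hy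
  have hrest := antitoneOn_gammaNormRatio (a := a + 1) (b := b + 1) (by linarith) (by linarith)
    h₁ h₂ hy.le
  have hpos : 0 < gammaNormRatio (a + 1) (b + 1) y₂ := by
    unfold gammaNormRatio
    exact div_pos (norm_pos_iff.mpr (Gamma_ofReal_add_mul_I_ne_zero _ h₂.ne'))
      (norm_pos_iff.mpr (Gamma_ofReal_add_mul_I_ne_zero _ h₂.ne'))
  rw [gammaNormRatio_eq_mul_add_one _ _ h₁.ne', gammaNormRatio_eq_mul_add_one _ _ h₂.ne']
  calc _ < ‖(b : ℂ) + y₁ * I‖ / ‖(a : ℂ) + y₁ * I‖ * gammaNormRatio (a + 1) (b + 1) y₂ :=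
        mul_lt_mul_of_pos_right hfirst hpos
    _ ≤ _ := mul_le_mul_of_nonneg_left hrest (by positivity)

lemma norm_X (σ t : ℝ) :
    ‖X (σ + t * I)‖ =
      (5 / Real.pi) ^ ((1 : ℝ) / 2 - σ) * gammaNormRatio (1 - σ / 2) ((1 + σ) / 2) (t / 2) := by
  have hbase : (5 / Real.pi : ℂ) = ((5 / Real.pi : ℝ) : ℂ) := by push_cast; rfl
  have hnum : 1 - ((σ : ℂ) + t * I) / 2 = conj (((1 - σ / 2 : ℝ) : ℂ) + (t / 2 : ℝ) * I) := by
    simp only [map_add, map_mul, conj_ofReal, conj_I]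
    push_cast
    ring
  have hden : (1 + ((σ : ℂ) + t * I)) / 2 = ((1 + σ) / 2 : ℝ) + (t / 2 : ℝ) * I := by
    push_cast; ring
  rw [X, norm_div, norm_mul, hbase, norm_cpow_eq_rpow_re_of_pos (by positivity), hnum, hden,
    norm_Gamma_conj, gammaNormRatio, mul_div_assoc]
  simp

theorem stmt_7 (σ : ℝ) (hσ : 1 / 2 < σ) :
    StrictAntiOn (fun t : ℝ => ‖X ((σ : ℂ) + (t : ℂ) * Complex.I)‖) (Set.Ioi 0) ∧
    StrictMonoOn (fun t : ℝ => ‖X ((σ : ℂ) + (t : ℂ) * Complex.I)‖) (Set.Iio 0) := by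
  have hratio := strictAntiOn_gammaNormRatio (a := 1 - σ / 2) (b := (1 + σ) / 2)
    (by linarith) (by linarith)
  have hC : (0 : ℝ) < (5 / Real.pi) ^ ((1 : ℝ) / 2 - σ) := by positivity
  constructor
  · intro t₁ (h₁ : 0 < t₁) t₂ (h₂ : 0 < t₂) ht
    simp only [norm_X]
    exact mul_lt_mul_of_pos_left (hratio (half_pos h₁) (half_pos h₂) (by linarith)) hC
  · intro t₁ (h₁ : t₁ < 0) t₂ (h₂ : t₂ < 0) ht
    simp only [norm_X, ← gammaNormRatio_neg _ _ (_ / 2)]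
    exact mul_lt_mul_of_pos_left
      (hratio (show 0 < -(t₂ / 2) by linarith) (show 0 < -(t₁ / 2) by linarith) (by linarith)) hC
end

section
/- For every real σ > 1/2, ‖X(σ + it)‖ tends to 0 as t → +∞. -/
open Filter Topology Complex ComplexConjugate

lemma tendsto_mellin_vertical_atTop {E : Type*} [NormedAddCommGroup E] [NormedSpace ℂ E]
    (f : ℝ → E) (σ : ℝ) :
    Tendsto (fun t : ℝ => mellin f (σ + t * I)) atTop (𝓝 0) := by
  have hfreq : Tendsto (fun t : ℝ => t / (2 * Real.pi)) atTop (cocompact ℝ) :=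
    (tendsto_id.atTop_div_const (by positivity)).mono_right atTop_le_cocompact
  simpa [mellin_eq_fourier, Function.comp_def] using (Real.zero_at_infty_fourier _).comp hfreq

lemma betaIntegral_eq_mellin (s c : ℂ) :
    betaIntegral s c
      = mellin ((Set.Ioo (0 : ℝ) 1).indicator fun x => (1 - (x : ℂ)) ^ (c - 1)) s := by
  have hsmul : ∀ x : ℝ, (x : ℂ) ^ (s - 1) •
      (Set.Ioo (0 : ℝ) 1).indicator (fun x => (1 - (x : ℂ)) ^ (c - 1)) x
      = (Set.Ioo (0 : ℝ) 1).indicator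
          (fun x => (x : ℂ) ^ (s - 1) * (1 - (x : ℂ)) ^ (c - 1)) x := by
    intro x
    by_cases hx : x ∈ Set.Ioo (0 : ℝ) 1 <;> simp [hx]
  rw [mellin, funext hsmul, MeasureTheory.setIntegral_indicator measurableSet_Ioo,
    Set.inter_eq_right.mpr Set.Ioo_subset_Ioi_self, betaIntegral,
    intervalIntegral.integral_of_le zero_le_one, MeasureTheory.integral_Ioc_eq_integral_Ioo]

lemma tendsto_betaIntegral_vertical_atTop (σ : ℝ) (c : ℂ) :
    Tendsto (fun t : ℝ => betaIntegral (σ + t * I) c) atTop (𝓝 0) := by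
  simpa only [betaIntegral_eq_mellin] using tendsto_mellin_vertical_atTop _ σ

lemma Gamma_div_Gamma_add_eq_betaIntegral_div {s c : ℂ} (hs : 0 < s.re) (hc : 0 < c.re) :
    Gamma s / Gamma (s + c) = betaIntegral s c / Gamma c := by
  have hsc : Gamma (s + c) ≠ 0 := Gamma_ne_zero_of_re_pos (by simp only [add_re]; positivity)
  rw [div_eq_div_iff hsc (Gamma_ne_zero_of_re_pos hc), Gamma_mul_Gamma_eq_betaIntegral hs hc]
  ring

lemma Gamma_div_Gamma_eq_mul_Gamma_add_one_div {s w : ℂ} (hs : s ≠ 0) (hw : w ≠ 0) :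
    Gamma s / Gamma w = w / s * (Gamma (s + 1) / Gamma (w + 1)) := by
  rw [Gamma_add_one s hs, Gamma_add_one w hw]
  field_simp

lemma tendsto_vertical_div_vertical_atTop (a b : ℝ) :
    Tendsto (fun t : ℝ => ((b : ℂ) + t * I) / (a + t * I)) atTop (𝓝 1) := by
  have hnorm : Tendsto (fun t : ℝ => ‖(a : ℂ) + t * I‖) atTop atTop :=
    tendsto_atTop_mono (fun t => by simpa using abs_im_le_norm ((a : ℂ) + t * I))
      tendsto_abs_atTop_atTop
  have hinv : Tendsto (fun t : ℝ => ((a : ℂ) + t * I)⁻¹) atTop (𝓝 0) :=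
    tendsto_inv₀_cobounded.comp (tendsto_norm_atTop_iff_cobounded.mp hnorm)
  have hlim := (hinv.const_mul ((b : ℂ) - a)).const_add 1
  rw [mul_zero, add_zero] at hlim
  refine hlim.congr' ?_
  filter_upwards [eventually_gt_atTop 0] with t ht
  have hne : (a : ℂ) + t * I ≠ 0 := fun h => by simpa [ht.ne'] using congrArg im h
  field_simp
  ring

lemma tendsto_Gamma_div_Gamma_vertical_atTop_of_pos {a b : ℝ} (ha : 0 < a) (hab : a < b) :
    Tendsto (fun t : ℝ => Gamma (a + t * I) / Gamma (b + t * I)) atTop (𝓝 0) := by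
  have hc : 0 < ((b : ℂ) - a).re := by simpa using hab
  have heq : ∀ t : ℝ, Gamma (a + t * I) / Gamma (b + t * I)
      = betaIntegral (a + t * I) (b - a) / Gamma (b - a) := fun t => by
    rw [← Gamma_div_Gamma_add_eq_betaIntegral_div (by simpa using ha) hc]
    ring_nf
  simpa only [heq, zero_div] using (tendsto_betaIntegral_vertical_atTop a _).div_const _

lemma tendsto_Gamma_div_Gamma_vertical_atTop {a b : ℝ} (hab : a < b) :
    Tendsto (fun t : ℝ => Gamma (a + t * I) / Gamma (b + t * I)) atTop (𝓝 0) := by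
  obtain ⟨n, hn⟩ := exists_nat_gt (-a)
  induction n generalizing a b with
  | zero => exact tendsto_Gamma_div_Gamma_vertical_atTop_of_pos (by simpa using hn) hab
  | succ n ih =>
    have hshift := ih (a := a + 1) (b := b + 1) (by linarith) (by push_cast at hn; linarith)
    have hprod := (tendsto_vertical_div_vertical_atTop a b).mul hshift
    rw [mul_zero] at hprod
    refine hprod.congr' ?_
    filter_upwards [eventually_gt_atTop 0] with t ht
    have hne : ∀ x : ℝ, (x : ℂ) + t * I ≠ 0 := fun x h => by
      simpa [ht.ne'] using congrArg im h
    rw [Gamma_div_Gamma_eq_mul_Gamma_add_one_div (hne a) (hne b)]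
    push_cast
    ring_nf

lemma norm_X_eq (σ t : ℝ) :
    ‖X (σ + t * I)‖ = (5 / Real.pi) ^ (1 / 2 - σ)
      * ‖Gamma ((1 - σ / 2 : ℝ) + (t / 2 : ℝ) * I)
          / Gamma (((1 + σ) / 2 : ℝ) + (t / 2 : ℝ) * I)‖ := by
  have hnum : 1 - (σ + t * I) / 2 = conj (((1 - σ / 2 : ℝ) : ℂ) + (t / 2 : ℝ) * I) := by
    simp only [map_add, map_mul, conj_ofReal, conj_I]
    push_cast
    ring
  have hden : (1 + (σ + t * I)) / 2 = ((1 + σ) / 2 : ℝ) + (t / 2 : ℝ) * I := by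
    push_cast
    ring
  have hpow :
      ‖(5 / Real.pi : ℂ) ^ ((1 : ℂ) / 2 - (σ + t * I))‖ = (5 / Real.pi) ^ (1 / 2 - σ) := by
    rw [show (5 / Real.pi : ℂ) = ((5 / Real.pi : ℝ) : ℂ) by push_cast; rfl,
      norm_cpow_eq_rpow_re_of_pos (by positivity)]
    simp
  rw [X, norm_div, norm_mul, hnum, hden, hpow, Gamma_conj, norm_conj, mul_div_assoc, norm_div]

theorem stmt_14 (σ : ℝ) (hσ : 1 / 2 < σ) :
    Filter.Tendsto (fun t : ℝ => ‖X ((σ : ℂ) + (t : ℂ) * Complex.I)‖)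
      Filter.atTop (nhds 0) := by
  have hratio := tendsto_Gamma_div_Gamma_vertical_atTop
    (a := 1 - σ / 2) (b := (1 + σ) / 2) (by linarith)
  have hhalf : Tendsto (fun t : ℝ => t / 2) atTop atTop := tendsto_id.atTop_div_const two_pos
  simpa only [norm_X_eq, norm_zero, mul_zero, Function.comp_def] using
    ((hratio.comp hhalf).norm.const_mul ((5 / Real.pi) ^ (1 / 2 - σ)))
end
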